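/- Let n ≥ 1, ε > 0, θ ∈ C_c^∞(ℝⁿ,ℝ), and u ∈ L¹(ℝⁿ) ∩ L²(ℝⁿ). Then for every w ∈ ℝⁿ, (T_ε^*(θ(η)·T_ε u))(w) = ε^{−n}(2π)^{−n} ∫_{ℝⁿ} 𝓕θ((x−w)/ε) e^{−|x−w|²/(4ε)} u(x) dx, where θ(η)·T_ε u denotes the function (y,η) ↦ θ(η) T_ε u(y,η). -/

import Mathlib

open MeasureTheory Filter
open scoped Real Topology ENNReal

noncomputable section

abbrev Evec (n : ℕ) := EuclideanSpace ℝ (Fin n)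

/-- real dot product -/
def dotR {n : ℕ} (v w : Evec n) : ℝ := ∑ i, v i * w i

/-- the constant `c_n = 2^{-n/2} π^{-3n/4}` -/
def cFBI (n : ℕ) : ℝ := (2 : ℝ) ^ (-(n : ℝ) / 2) * Real.pi ^ (-(3 * (n : ℝ)) / 4)

/-- the FBI transform `T_ε u (y,η) = c_n ε^{-3n/4} ∫ u(x) e^{iη·(y−x)/ε − |y−x|²/(2ε)} dx` -/
def fbi {n : ℕ} (ε : ℝ) (u : Evec n → ℂ) (p : Evec n × Evec n) : ℂ :=
  ((cFBI n * ε ^ (-(3 * (n : ℝ)) / 4) : ℝ) : ℂ) *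
    ∫ x : Evec n, u x *
      Complex.exp ((Complex.I * (dotR p.2 (p.1 - x) : ℂ) - ((‖p.1 - x‖ ^ 2 : ℝ) : ℂ) / 2) / (ε : ℂ))

/-- the adjoint FBI transform
`T_ε^* f (x) = c_n ε^{-3n/4} ∫ f(y,η) e^{iη·(x−y)/ε − |x−y|²/(2ε)} dy dη` -/
def fbiAdj {n : ℕ} (ε : ℝ) (f : Evec n × Evec n → ℂ) (x : Evec n) : ℂ :=
  ((cFBI n * ε ^ (-(3 * (n : ℝ)) / 4) : ℝ) : ℂ) *
    ∫ p : Evec n × Evec n, f p *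
      Complex.exp ((Complex.I * (dotR p.2 (x - p.1) : ℂ) - ((‖x - p.1‖ ^ 2 : ℝ) : ℂ) / 2) / (ε : ℂ))

/-- the Fourier transform `𝓕θ(ξ) = ∫ θ(η) e^{−i η·ξ} dη` of a (real-valued) function -/
def fourierR {n : ℕ} (θ : Evec n → ℝ) (ξ : Evec n) : ℂ :=
  ∫ η : Evec n, (θ η : ℂ) * Complex.exp (-(Complex.I) * (dotR η ξ : ℂ))

open scoped RealInnerProductSpace
open Complex

lemma dotR_eq_inner {n : ℕ} (v w : Evec n) : dotR v w = ⟪v, w⟫ := by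
  simp [dotR, PiLp.inner_apply, RCLike.inner_apply, mul_comm]

lemma dotR_add_right {n : ℕ} (v a b : Evec n) : dotR v (a + b) = dotR v a + dotR v b := by
  simp [dotR_eq_inner, inner_add_right]

lemma dotR_smul_right {n : ℕ} (v : Evec n) (c : ℝ) (a : Evec n) :
    dotR v (c • a) = c * dotR v a := by
  simp only [dotR_eq_inner]; exact real_inner_smul_right _ _ _

lemma dotR_neg_right {n : ℕ} (v a : Evec n) : dotR v (-a) = -dotR v a := by
  simp [dotR_eq_inner, inner_neg_right]

-- exponent splitting
lemma exp_split {n : ℕ} {ε : ℝ} (hε : 0 < ε) (w x y η : Evec n) :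
    Complex.exp ((Complex.I * (dotR η (y - x) : ℝ) - ((‖y - x‖ ^ 2 : ℝ) : ℂ) / 2) / (ε : ℂ)) *
      Complex.exp ((Complex.I * (dotR η (w - y) : ℝ) - ((‖w - y‖ ^ 2 : ℝ) : ℂ) / 2) / (ε : ℂ)) =
    ((Real.exp (-(‖y - x‖ ^ 2 + ‖w - y‖ ^ 2) / (2 * ε)) : ℝ) : ℂ) *
      Complex.exp (-Complex.I * ((dotR η (ε⁻¹ • (x - w)) : ℝ) : ℂ)) := by
  have hεC : (ε : ℂ) ≠ 0 := by exact_mod_cast hε.ne'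
  rw [← Complex.exp_add, Complex.ofReal_exp, ← Complex.exp_add]
  congr 1
  have h1 : dotR η (y - x) + dotR η (w - y) = -dotR η (x - w) := by
    rw [← dotR_add_right, ← dotR_neg_right]; congr 1; abel
  have h2 : dotR η (ε⁻¹ • (x - w)) = ε⁻¹ * dotR η (x - w) := dotR_smul_right _ _ _
  have h1' : ((dotR η (y - x) : ℝ) : ℂ) + ((dotR η (w - y) : ℝ) : ℂ)
      = -((dotR η (x - w) : ℝ) : ℂ) := by exact_mod_cast congrArg Complex.ofReal h1
  rw [h2]
  push_cast
  field_simp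
  ring_nf
  linear_combination (Complex.I * 2) * h1'

lemma gauss_int {n : ℕ} {ε : ℝ} (hε : 0 < ε) (x w : Evec n) :
    ∫ y : Evec n, ((Real.exp (-(‖y - x‖ ^ 2 + ‖w - y‖ ^ 2) / (2 * ε)) : ℝ) : ℂ)
      = (((Real.pi * ε) ^ ((n : ℝ) / 2) : ℝ) : ℂ) *
        Complex.exp (-((‖x - w‖ ^ 2 : ℝ) : ℂ) / (4 * (ε : ℂ))) := by
  have hεC : (ε : ℂ) ≠ 0 := by exact_mod_cast hε.ne'
  have h1 : ∀ y : Evec n, (-(‖y - x‖ ^ 2 + ‖w - y‖ ^ 2) / (2 * ε) : ℝ)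
      = (-ε⁻¹ * ‖y‖ ^ 2 + ε⁻¹ * ⟪x + w, y⟫) + (-(‖x‖ ^ 2 + ‖w‖ ^ 2) / (2 * ε)) := by
    intro y
    rw [norm_sub_sq_real, norm_sub_sq_real, inner_add_left, real_inner_comm y x]
    field_simp
    ring
  have h2 : ∀ y : Evec n,
      ((Real.exp ((-ε⁻¹ * ‖y‖ ^ 2 + ε⁻¹ * ⟪x + w, y⟫) + (-(‖x‖ ^ 2 + ‖w‖ ^ 2) / (2 * ε))) : ℝ) : ℂ)
      = Complex.exp (-((ε⁻¹ : ℝ) : ℂ) * ‖y‖ ^ 2 + ((ε⁻¹ : ℝ) : ℂ) * ((⟪x + w, y⟫ : ℝ) : ℂ))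
        * ((Real.exp (-(‖x‖ ^ 2 + ‖w‖ ^ 2) / (2 * ε)) : ℝ) : ℂ) := by
    intro y
    rw [Complex.ofReal_exp, Complex.ofReal_exp, ← Complex.exp_add]
    congr 1
    push_cast
    ring
  simp_rw [h1, h2]
  rw [integral_mul_const]
  rw [GaussianFourier.integral_cexp_neg_mul_sq_norm_add (by simpa using inv_pos.mpr hε)
    ((ε⁻¹ : ℝ) : ℂ) (x + w)]
  have hπε : (0 : ℝ) < Real.pi * ε := by positivity
  have hbase : ((Real.pi : ℂ) / ((ε⁻¹ : ℝ) : ℂ)) = (((Real.pi * ε : ℝ)) : ℂ) := by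
    push_cast; field_simp
  have hrank : (Module.finrank ℝ (Evec n) : ℂ) = (n : ℂ) := by
    norm_cast; exact finrank_euclideanSpace_fin
  rw [hbase]
  have hpow : (((Real.pi * ε : ℝ) : ℂ)) ^ ((Module.finrank ℝ (Evec n) : ℂ) / 2)
      = (((Real.pi * ε) ^ ((n : ℝ) / 2) : ℝ) : ℂ) := by
    rw [Complex.ofReal_cpow hπε.le]
    norm_num [hrank]
  rw [hpow, mul_assoc]
  congr 1
  rw [Complex.ofReal_exp, ← Complex.exp_add]
  congr 1
  have hre : ((ε⁻¹ : ℝ) : ℂ) ^ 2 * (‖x + w‖ : ℂ) ^ 2 / (4 * ((ε⁻¹ : ℝ) : ℂ))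
        + ((-(‖x‖ ^ 2 + ‖w‖ ^ 2) / (2 * ε) : ℝ) : ℂ)
      = ((((‖x + w‖ ^ 2) / (4 * ε) - (‖x‖ ^ 2 + ‖w‖ ^ 2) / (2 * ε)) : ℝ) : ℂ) := by
    push_cast
    field_simp
    ring
  rw [hre]
  have hkey : (‖x + w‖ ^ 2) / (4 * ε) - (‖x‖ ^ 2 + ‖w‖ ^ 2) / (2 * ε)
      = -(‖x - w‖ ^ 2) / (4 * ε) := by
    rw [norm_add_sq_real, norm_sub_sq_real]
    field_simp
    ring
  rw [hkey]
  push_cast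
  ring

lemma integrable_gaussShift {n : ℕ} {ε : ℝ} (hε : 0 < ε) (w : Evec n) :
    Integrable (fun y : Evec n => Real.exp (-‖w - y‖ ^ 2 / (2 * ε))) := by
  have h := (GaussianFourier.integrable_cexp_neg_mul_sq_norm_add
    (b := (((2 * ε)⁻¹ : ℝ) : ℂ)) (by simpa using inv_pos.mpr (mul_pos two_pos hε))
    ((ε⁻¹ : ℝ) : ℂ) w).norm
  have h2 := h.mul_const (Real.exp (-(2 * ε)⁻¹ * ‖w‖ ^ 2))
  apply h2.congr
  filter_upwards with v
  have hz : (-(((2 * ε)⁻¹ : ℝ) : ℂ) * ‖v‖ ^ 2 + ((ε⁻¹ : ℝ) : ℂ) * ((⟪w, v⟫ : ℝ) : ℂ))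
      = (((-(2 * ε)⁻¹ * ‖v‖ ^ 2 + ε⁻¹ * ⟪w, v⟫ : ℝ)) : ℂ) := by push_cast; ring
  rw [hz, Complex.norm_exp, Complex.ofReal_re, ← Real.exp_add]
  congr 1
  rw [norm_sub_sq_real]
  field_simp
  ring

lemma rpow_sq_helper {x : ℝ} (hx : 0 < x) (a : ℝ) : (x ^ a) ^ 2 = x ^ (2 * a) := by
  rw [← Real.rpow_natCast (x ^ a) 2, ← Real.rpow_mul hx.le]
  norm_num
  ring_nf

lemma const_eq {n : ℕ} {ε : ℝ} (hε : 0 < ε) :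
    (cFBI n * ε ^ (-(3 * (n : ℝ)) / 4)) ^ 2 * (Real.pi * ε) ^ ((n : ℝ) / 2)
      = ε ^ (-(n : ℝ)) * (2 * Real.pi) ^ (-(n : ℝ)) := by
  have hπ := Real.pi_pos
  rw [cFBI, Real.mul_rpow hπ.le hε.le, Real.mul_rpow (by norm_num) hπ.le, mul_pow, mul_pow,
    rpow_sq_helper two_pos, rpow_sq_helper hπ, rpow_sq_helper hε]
  rw [show (2 * (-(n : ℝ) / 2)) = -(n : ℝ) by ring]
  rw [show (2:ℝ) ^ (-(n:ℝ)) * π ^ (2 * (-(3 * (n:ℝ)) / 4)) * ε ^ (2 * (-(3 * (n:ℝ)) / 4)) *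
        (π ^ ((n:ℝ) / 2) * ε ^ ((n:ℝ) / 2))
      = (2:ℝ) ^ (-(n:ℝ)) * ((π ^ (2 * (-(3 * (n:ℝ)) / 4)) * π ^ ((n:ℝ) / 2)) *
        (ε ^ (2 * (-(3 * (n:ℝ)) / 4)) * ε ^ ((n:ℝ) / 2))) by ring,
    ← Real.rpow_add hπ, ← Real.rpow_add hε]
  rw [show (2 * (-(3 * (n : ℝ)) / 4) + (n : ℝ) / 2) = -(n : ℝ) by ring]
  ring

/-- For `θ ∈ C_c^∞(ℝⁿ,ℝ)` and `u ∈ L¹ ∩ L²`, for every `w`,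
`T_ε^*(θ(η) T_ε u)(w) = ε^{−n} (2π)^{−n} ∫ 𝓕θ((x−w)/ε) e^{−|x−w|²/(4ε)} u(x) dx`. -/
theorem statement_12 (n : ℕ) (hn : 1 ≤ n) (ε : ℝ) (hε : 0 < ε)
    (θ : Evec n → ℝ) (hθ : ContDiff ℝ (⊤ : ℕ∞) θ) (hθc : HasCompactSupport θ)
    (u : Evec n → ℂ) (hu1 : Integrable u (volume : Measure (Evec n)))
    (hu2 : MemLp u 2 (volume : Measure (Evec n))) :
    ∀ w : Evec n,
      fbiAdj ε (fun p => (θ p.2 : ℂ) * fbi ε u p) w =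
        ((ε ^ (-(n : ℝ)) * (2 * Real.pi) ^ (-(n : ℝ)) : ℝ) : ℂ) *
          ∫ x : Evec n, fourierR θ (ε⁻¹ • (x - w)) *
            Complex.exp (-((‖x - w‖ ^ 2 : ℝ) : ℂ) / (4 * (ε : ℂ))) * u x := by
  intro w
  have hεC : (ε : ℂ) ≠ 0 := by exact_mod_cast hε.ne'
  set C : ℝ := cFBI n * ε ^ (-(3 * (n : ℝ)) / 4) with hCdef
  set A : Evec n → Evec n → ℂ := fun x y =>
    ((Real.exp (-(‖y - x‖ ^ 2 + ‖w - y‖ ^ 2) / (2 * ε)) : ℝ) : ℂ) with hAdef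
  set B : Evec n → Evec n → ℂ := fun x η =>
    ((θ η : ℝ) : ℂ) * Complex.exp (-Complex.I * ((dotR η (ε⁻¹ • (x - w)) : ℝ) : ℂ)) with hBdef
  set Ψ : (Evec n × Evec n) → Evec n → ℂ := fun p x => u x * (A x p.1 * B x p.2) with hΨdef
  -- Step 1 : rewrite the left-hand side as an iterated integral
  have step1 : fbiAdj ε (fun p => (θ p.2 : ℂ) * fbi ε u p) w
      = (C : ℂ) * ∫ p : Evec n × Evec n, (C : ℂ) * ∫ x : Evec n, Ψ p x := by
    rw [fbiAdj]
    congr 1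
    refine integral_congr_ae (Filter.Eventually.of_forall fun p => ?_)
    simp only [fbi]
    rw [← hCdef]
    rw [show (θ p.2 : ℂ) * ((C : ℂ) *
          ∫ x : Evec n, u x * Complex.exp ((Complex.I * (dotR p.2 (p.1 - x) : ℝ)
            - ((‖p.1 - x‖ ^ 2 : ℝ) : ℂ) / 2) / (ε : ℂ))) *
          Complex.exp ((Complex.I * (dotR p.2 (w - p.1) : ℝ)
            - ((‖w - p.1‖ ^ 2 : ℝ) : ℂ) / 2) / (ε : ℂ))
        = (C : ℂ) * (((θ p.2 : ℂ) * Complex.exp ((Complex.I * (dotR p.2 (w - p.1) : ℝ)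
            - ((‖w - p.1‖ ^ 2 : ℝ) : ℂ) / 2) / (ε : ℂ))) *
          ∫ x : Evec n, u x * Complex.exp ((Complex.I * (dotR p.2 (p.1 - x) : ℝ)
            - ((‖p.1 - x‖ ^ 2 : ℝ) : ℂ) / 2) / (ε : ℂ))) by ring]
    congr 1
    rw [← integral_const_mul]
    refine integral_congr_ae (Filter.Eventually.of_forall fun x => ?_)
    have key := exp_split hε w x p.1 p.2
    calc (θ p.2 : ℂ) * Complex.exp ((Complex.I * (dotR p.2 (w - p.1) : ℝ)
            - ((‖w - p.1‖ ^ 2 : ℝ) : ℂ) / 2) / (ε : ℂ)) *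
          (u x * Complex.exp ((Complex.I * (dotR p.2 (p.1 - x) : ℝ)
            - ((‖p.1 - x‖ ^ 2 : ℝ) : ℂ) / 2) / (ε : ℂ)))
        = u x * ((θ p.2 : ℂ) *
            (Complex.exp ((Complex.I * (dotR p.2 (p.1 - x) : ℝ)
              - ((‖p.1 - x‖ ^ 2 : ℝ) : ℂ) / 2) / (ε : ℂ)) *
             Complex.exp ((Complex.I * (dotR p.2 (w - p.1) : ℝ)
              - ((‖w - p.1‖ ^ 2 : ℝ) : ℂ) / 2) / (ε : ℂ)))) := by ring
      _ = Ψ p x := by rw [key, hΨdef, hAdef, hBdef]; ring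
  -- Integrability of the full integrand
  have hθint : Integrable (fun η : Evec n => |θ η|) :=
    (hθ.continuous.integrable_of_hasCompactSupport hθc).abs
  have hgauss : Integrable (fun y : Evec n => Real.exp (-‖w - y‖ ^ 2 / (2 * ε))) :=
    integrable_gaussShift hε w
  have hg : Integrable (fun z : (Evec n × Evec n) × Evec n =>
      (Real.exp (-‖w - z.1.1‖ ^ 2 / (2 * ε)) * |θ z.1.2|) * ‖u z.2‖)
      ((volume : Measure (Evec n × Evec n)).prod volume) := by
    have h12 : Integrable (fun p : Evec n × Evec n =>
        Real.exp (-‖w - p.1‖ ^ 2 / (2 * ε)) * |θ p.2|) := by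
      rw [Measure.volume_eq_prod]
      exact hgauss.mul_prod hθint
    exact h12.mul_prod hu1.norm
  have hcont : Continuous (fun z : (Evec n × Evec n) × Evec n => A z.2 z.1.1 * B z.2 z.1.2) := by
    apply Continuous.mul
    · refine Complex.continuous_ofReal.comp (Real.continuous_exp.comp ?_)
      fun_prop
    · apply Continuous.mul
      · exact Complex.continuous_ofReal.comp (hθ.continuous.comp (continuous_fst.snd))
      · refine Complex.continuous_exp.comp (Continuous.mul continuous_const
          (Complex.continuous_ofReal.comp ?_))
        have : (fun z : (Evec n × Evec n) × Evec n => dotR z.1.2 (ε⁻¹ • (z.2 - w)))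
            = fun z : (Evec n × Evec n) × Evec n => ⟪z.1.2, ε⁻¹ • (z.2 - w)⟫ := by
          funext z; exact dotR_eq_inner _ _
        rw [this]
        exact (continuous_fst.snd).inner (((continuous_snd.sub continuous_const).const_smul ε⁻¹))
  have haesm : AEStronglyMeasurable (Function.uncurry Ψ)
      ((volume : Measure (Evec n × Evec n)).prod volume) := by
    have hu' : AEStronglyMeasurable (fun z : (Evec n × Evec n) × Evec n => u z.2)
        ((volume : Measure (Evec n × Evec n)).prod volume) := hu1.1.comp_snd
    exact hu'.mul hcont.aestronglyMeasurable
  have hbound : ∀ z : (Evec n × Evec n) × Evec n, ‖Function.uncurry Ψ z‖ ≤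
      (Real.exp (-‖w - z.1.1‖ ^ 2 / (2 * ε)) * |θ z.1.2|) * ‖u z.2‖ := by
    rintro ⟨⟨y, η⟩, x⟩
    simp only [Function.uncurry, hΨdef, hAdef, hBdef]
    rw [norm_mul, norm_mul, norm_mul]
    have h1 : ‖((Real.exp (-(‖y - x‖ ^ 2 + ‖w - y‖ ^ 2) / (2 * ε)) : ℝ) : ℂ)‖
        ≤ Real.exp (-‖w - y‖ ^ 2 / (2 * ε)) := by
      rw [Complex.norm_real, Real.norm_eq_abs, abs_of_pos (Real.exp_pos _)]
      apply Real.exp_le_exp.mpr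
      apply div_le_div_of_nonneg_right ?_ (by positivity)
      nlinarith [sq_nonneg ‖y - x‖]
    have h2 : ‖Complex.exp (-Complex.I * ((dotR η (ε⁻¹ • (x - w)) : ℝ) : ℂ))‖ = 1 := by
      rw [show -Complex.I * ((dotR η (ε⁻¹ • (x - w)) : ℝ) : ℂ)
          = ((-(dotR η (ε⁻¹ • (x - w))) : ℝ) : ℂ) * Complex.I by push_cast; ring]
      rw [Complex.norm_exp_ofReal_mul_I]
    have h3 : ‖((θ η : ℝ) : ℂ)‖ = |θ η| := by rw [Complex.norm_real, Real.norm_eq_abs]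
    rw [h2, h3, mul_one]
    calc ‖u x‖ * (‖((Real.exp (-(‖y - x‖ ^ 2 + ‖w - y‖ ^ 2) / (2 * ε)) : ℝ) : ℂ)‖ * |θ η|)
        ≤ ‖u x‖ * (Real.exp (-‖w - y‖ ^ 2 / (2 * ε)) * |θ η|) := by
          apply mul_le_mul_of_nonneg_left ?_ (norm_nonneg _)
          exact mul_le_mul_of_nonneg_right h1 (abs_nonneg _)
      _ = (Real.exp (-‖w - y‖ ^ 2 / (2 * ε)) * |θ η|) * ‖u x‖ := by ring
  have hInt : Integrable (Function.uncurry Ψ)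
      ((volume : Measure (Evec n × Evec n)).prod volume) :=
    hg.mono' haesm (Filter.Eventually.of_forall hbound)
  -- Step 3 : compute the inner integral over p
  have step3 : ∀ x : Evec n, (∫ p : Evec n × Evec n, Ψ p x)
      = (((Real.pi * ε) ^ ((n : ℝ) / 2) : ℝ) : ℂ) *
        (fourierR θ (ε⁻¹ • (x - w)) *
          Complex.exp (-((‖x - w‖ ^ 2 : ℝ) : ℂ) / (4 * (ε : ℂ))) * u x) := by
    intro x
    rw [show (fun p : Evec n × Evec n => Ψ p x)
        = fun p : Evec n × Evec n => u x * (A x p.1 * B x p.2) from rfl]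
    rw [integral_const_mul]
    have hsplit : (∫ p : Evec n × Evec n, A x p.1 * B x p.2)
        = (∫ y : Evec n, A x y) * ∫ η : Evec n, B x η := by
      rw [Measure.volume_eq_prod]
      exact integral_prod_mul _ _
    rw [hsplit]
    have hBint : (∫ η : Evec n, B x η) = fourierR θ (ε⁻¹ • (x - w)) := rfl
    have hAint := gauss_int hε x w
    rw [hBint, hAint]
    ring
  -- Final assembly
  rw [step1, integral_const_mul, integral_integral_swap hInt]
  rw [integral_congr_ae (Filter.Eventually.of_forall step3), integral_const_mul]
  rw [show ((C : ℂ) * ((C : ℂ) * ((((Real.pi * ε) ^ ((n : ℝ) / 2) : ℝ) : ℂ) *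
      ∫ x : Evec n, fourierR θ (ε⁻¹ • (x - w)) *
        Complex.exp (-((‖x - w‖ ^ 2 : ℝ) : ℂ) / (4 * (ε : ℂ))) * u x)))
      = (((C ^ 2 * (Real.pi * ε) ^ ((n : ℝ) / 2) : ℝ)) : ℂ) *
      ∫ x : Evec n, fourierR θ (ε⁻¹ • (x - w)) *
        Complex.exp (-((‖x - w‖ ^ 2 : ℝ) : ℂ) / (4 * (ε : ℂ))) * u x by push_cast; ring]
  rw [hCdef, const_eq hε]

end
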